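/- Let Γ be a graph on n vertices and 𝓕 a family of graphs each having at least one edge. Then log₂|Forb(Γ,𝓕)| ≥ max over equipartitions 𝒱 of V(Γ) into k ≤ K classes of (ex(Γ/𝒱, 𝓕)·n² - k·n), provided n > K. -/

import Mathlib

/-!
Given an admissible weighting `S` of the cluster graph, delete from `Γ` every edge between parts
`i, j` with `S i j = 0`. Each remaining edge lands on a positive entry of `S`, so a copy of some
`F ∈ 𝓕` would yield a homomorphism of positive weight into `S`, contradicting `t(F, S) = 0`; hence
all `2 ^ e(G)` spanning subgraphs of the pruned graph `G` are `𝓕`-free. Every part has at least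
`(n - k) / k` vertices, so `e(G) ≥ e(S) ((n - k) / k) ^ 2`, and since `e(S) ≤ k ^ 2 / 2` this is
at least `e(S) n ^ 2 / k ^ 2 - k n`.
-/

open Finset

attribute [local instance] Classical.propDecidable

/-- The cluster-graph edge weight: density of ordered adjacent pairs between classes. -/
noncomputable def clusterW {V : Type*} {k : ℕ} (G : SimpleGraph V)
    (P : Fin k → Finset V) (i j : Fin k) : ℝ :=
  ((((P i) ×ˢ (P j)).filter fun p => G.Adj p.1 p.2).card : ℝ) /
    (((P i).card : ℝ) * ((P j).card : ℝ))

/-- Homomorphism weight of a map `φ` from the vertices of `F` into a weighted graph `R`. -/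
noncomputable def homW {α V : Type*} [Fintype α] (F : SimpleGraph α)
    (R : V → V → ℝ) (φ : α → V) : ℝ :=
  ∏ e ∈ F.edgeFinset, R (φ (Quot.out e).1) (φ (Quot.out e).2)

/-- Homomorphism density of `F` in a weighted graph `R`. -/
noncomputable def tW {α V : Type*} [Fintype α] [Fintype V] (F : SimpleGraph α)
    (R : V → V → ℝ) : ℝ :=
  (∑ φ : α → V, homW F R φ) / ((Fintype.card V : ℝ) ^ (Fintype.card α))

/-- Total edge weight of a weighted graph. -/
noncomputable def eW {V : Type*} [Fintype V] (R : V → V → ℝ) : ℝ :=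
  (∑ i, ∑ j, R i j) / 2

/-- Normalized edit distance between two weighted graphs on the same vertex set. -/
noncomputable def distW {V : Type*} [Fintype V] (R R' : V → V → ℝ) : ℝ :=
  (∑ i, ∑ j, |R i j - R' i j|) / ((Fintype.card V : ℝ) ^ 2)

/-- `G` contains a (subgraph) copy of `F`. -/
def HasCopy {α V : Type*} (F : SimpleGraph α) (G : SimpleGraph V) : Prop :=
  ∃ f : α ↪ V, ∀ u w, F.Adj u w → G.Adj (f u) (f w)

theorem HasCopy.mono {α V : Type*} {F : SimpleGraph α} {G H : SimpleGraph V}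
    (hF : HasCopy F G) (hGH : G ≤ H) : HasCopy F H :=
  let ⟨f, hf⟩ := hF
  ⟨f, fun u w huw => hGH (hf u w huw)⟩

section Density

variable {α W : Type*} [Fintype α] [Fintype W] {F : SimpleGraph α} {R : W → W → ℝ}

theorem homW_eq_zero_of_tW_eq_zero (hR : ∀ i j, 0 ≤ R i j) (h : tW F R = 0) (φ : α → W) :
    homW F R φ = 0 := by
  have hden : (Fintype.card W : ℝ) ^ Fintype.card α ≠ 0 := by
    have : 0 < Fintype.card (α → W) := Fintype.card_pos_iff.mpr ⟨φ⟩
    rw [Fintype.card_fun] at this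
    exact_mod_cast this.ne'
  have hsum := (div_eq_zero_iff.mp h).resolve_right hden
  exact (sum_eq_zero_iff_of_nonneg fun ψ _ => prod_nonneg fun e _ => hR _ _).mp hsum φ
    (mem_univ φ)

theorem SimpleGraph.adj_out_of_mem_edgeFinset {e : Sym2 α} (he : e ∈ F.edgeFinset) :
    F.Adj (Quot.out e).1 (Quot.out e).2 := by
  have hout : s((Quot.out e).1, (Quot.out e).2) = e := Quot.out_eq e
  rw [← SimpleGraph.mem_edgeSet, hout]
  exact F.mem_edgeFinset.mp he

theorem not_hasCopy_of_tW_eq_zero {V : Type*} {G : SimpleGraph V} (c : V → W)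
    (hR : ∀ i j, 0 ≤ R i j) (h : tW F R = 0) (hG : ∀ u v, G.Adj u v → 0 < R (c u) (c v)) :
    ¬ HasCopy F G := by
  rintro ⟨f, hf⟩
  have hpos : 0 < homW F R (c ∘ f) :=
    prod_pos fun e he => hG _ _ (hf _ _ (SimpleGraph.adj_out_of_mem_edgeFinset he))
  exact hpos.ne' (homW_eq_zero_of_tW_eq_zero hR h _)

end Density

namespace SimpleGraph

variable {V : Type*} [Fintype V]

theorem two_pow_card_edgeFinset_le_ncard (G : SimpleGraph V) {𝒮 : Set (SimpleGraph V)}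
    (h𝒮 : ∀ H ≤ G, H ∈ 𝒮) : 2 ^ #G.edgeFinset ≤ 𝒮.ncard := by
  have hfromEdgeSet : ∀ s ∈ G.edgeFinset.powerset, (fromEdgeSet (s : Set (Sym2 V))).edgeSet = s :=
    fun s hs => by
      rw [edgeSet_fromEdgeSet, sdiff_eq_left, Set.disjoint_left]
      exact fun e he => G.not_isDiag_of_mem_edgeSet (mem_edgeFinset.mp (mem_powerset.mp hs he))
  rw [← card_powerset, ← Set.ncard_coe_finset]
  refine Set.ncard_le_ncard_of_injOn (fun s => fromEdgeSet (s : Set (Sym2 V))) ?_ ?_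
    (Set.toFinite 𝒮)
  · intro s hs
    refine h𝒮 _ fun u v huv => ?_
    rw [← mem_edgeSet, hfromEdgeSet s hs] at huv
    exact mem_edgeFinset.mp (mem_powerset.mp hs huv)
  · intro s hs t ht hst
    have := congrArg edgeSet hst
    rwa [hfromEdgeSet s hs, hfromEdgeSet t ht, coe_inj] at this

variable {ι : Type*} [Fintype ι]

theorem card_interedges_univ (G : SimpleGraph V) :
    #(G.interedges univ univ) = 2 * #G.edgeFinset := by
  rw [← G.dart_card_eq_twice_card_edges, interedges_def, univ_product_univ,
    ← Fintype.card_subtype]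
  exact Fintype.card_congr
    { toFun := fun p => ⟨p.1, p.2⟩
      invFun := fun d => ⟨d.toProd, d.adj⟩
      left_inv := fun _ => rfl
      right_inv := fun _ => rfl }

theorem sum_sum_card_interedges (G : SimpleGraph V) (P : ι → Finset V) {c : V → ι}
    (hc : ∀ v i, c v = i ↔ v ∈ P i) :
    ∑ i, ∑ j, #(G.interedges (P i) (P j)) = 2 * #G.edgeFinset := by
  rw [← card_interedges_univ, ← Fintype.sum_prod_type',
    card_eq_sum_card_fiberwise (f := fun p => (c p.1, c p.2)) (t := univ) fun _ _ => mem_univ _]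
  refine sum_congr rfl fun q _ => congrArg card ?_
  ext ⟨u, v⟩
  simp only [mem_interedges_iff, mem_filter, mem_univ, true_and, Prod.ext_iff, hc]
  tauto

end SimpleGraph

section Partition

variable {V ι : Type*} (P : ι → Finset V)

theorem exists_partIndex (hdisj : ∀ i j, i ≠ j → Disjoint (P i) (P j))
    (hcover : ∀ v, ∃ i, v ∈ P i) : ∃ c : V → ι, ∀ v i, c v = i ↔ v ∈ P i := by
  choose c hc using hcover
  exact ⟨c, fun v i => ⟨fun h => h ▸ hc v,
    fun hv => by_contra fun hne => disjoint_left.mp (hdisj _ _ hne) (hc v) hv⟩⟩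

theorem card_le_card_mul_card_add_one [Fintype V] [Fintype ι] (hcover : ∀ v, ∃ i, v ∈ P i)
    (hsize : ∀ i j, #(P i) ≤ #(P j) + 1) (i : ι) :
    Fintype.card V ≤ Fintype.card ι * (#(P i) + 1) :=
  calc Fintype.card V ≤ #(univ.biUnion P) :=
        card_le_card fun v _ => mem_biUnion.mpr <| (hcover v).imp fun j hj => ⟨mem_univ j, hj⟩
    _ ≤ ∑ j, #(P j) := card_biUnion_le
    _ ≤ ∑ _j : ι, (#(P i) + 1) := sum_le_sum fun j _ => hsize j i
    _ = Fintype.card ι * (#(P i) + 1) := by rw [sum_const, card_univ, smul_eq_mul]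

theorem sub_div_le_card [Fintype V] [Fintype ι] (hcover : ∀ v, ∃ i, v ∈ P i)
    (hsize : ∀ i j, #(P i) ≤ #(P j) + 1) (hι : 0 < Fintype.card ι) (i : ι) :
    ((Fintype.card V : ℝ) - Fintype.card ι) / Fintype.card ι ≤ #(P i) := by
  have h := card_le_card_mul_card_add_one P hcover hsize i
  rw [div_le_iff₀ (by exact_mod_cast hι)]
  have h' : (Fintype.card V : ℝ) ≤ Fintype.card ι * (#(P i) + 1) := by exact_mod_cast h
  linarith

end Partition

section ClusterGraph

variable {V : Type*} {k : ℕ} (Γ : SimpleGraph V) (P : Fin k → Finset V) (i j : Fin k)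

theorem clusterW_mul_card_mul_card :
    clusterW Γ P i j * (#(P i) * #(P j)) = #(Γ.interedges (P i) (P j)) :=
  div_mul_cancel_of_imp fun h => by
    have hle : (#(Γ.interedges (P i) (P j)) : ℝ) ≤ #(P i) * #(P j) := by
      exact_mod_cast Γ.card_interedges_le_mul _ _
    exact le_antisymm (h ▸ hle) (Nat.cast_nonneg _)

theorem clusterW_le_one : clusterW Γ P i j ≤ 1 :=
  div_le_one_of_le₀ (by exact_mod_cast Γ.card_interedges_le_mul _ _) (by positivity)

end ClusterGraph

section Weights

variable {ι : Type*} [Fintype ι] {S : ι → ι → ℝ}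

theorem eW_le_card_sq_div_two (hS : ∀ i j, S i j ≤ 1) : eW S ≤ Fintype.card ι ^ 2 / 2 := by
  refine div_le_div_of_nonneg_right ?_ zero_le_two
  calc ∑ i, ∑ j, S i j ≤ ∑ _i : ι, ∑ _j : ι, (1 : ℝ) :=
        sum_le_sum fun i _ => sum_le_sum fun j _ => hS i j
    _ = Fintype.card ι ^ 2 := by simp [sq]

end Weights

def forb {V κ : Type*} {α : κ → Type*} (Γ : SimpleGraph V) (F : ∀ i, SimpleGraph (α i)) :
    Set (SimpleGraph V) :=
  {G | G ≤ Γ ∧ ∀ i, ¬ HasCopy (F i) G}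

namespace SimpleGraph

section Prune

variable {V ι : Type*} (Γ : SimpleGraph V) (c : V → ι) (S : ι → ι → ℝ)

def pruneByWeight : SimpleGraph V :=
  Γ ⊓ fromRel fun u v => 0 < S (c u) (c v)

theorem pruneByWeight_le : Γ.pruneByWeight c S ≤ Γ := inf_le_left

variable {Γ c S}

theorem pos_of_pruneByWeight_adj (hS : ∀ i j, S i j = S j i) {u v : V}
    (h : (Γ.pruneByWeight c S).Adj u v) : 0 < S (c u) (c v) :=
  h.2.2.elim id fun h' => hS (c u) (c v) ▸ h'

theorem interedges_pruneByWeight {P : ι → Finset V} (hc : ∀ v i, c v = i ↔ v ∈ P i) {i j : ι}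
    (hij : 0 < S i j) :
    (Γ.pruneByWeight c S).interedges (P i) (P j) = Γ.interedges (P i) (P j) := by
  ext ⟨u, v⟩
  rw [mk_mem_interedges_iff, mk_mem_interedges_iff]
  simp only [pruneByWeight, inf_adj, fromRel_adj]
  constructor
  · exact fun ⟨hu, hv, huv, _⟩ => ⟨hu, hv, huv⟩
  · rintro ⟨hu, hv, huv⟩
    refine ⟨hu, hv, huv, huv.ne, Or.inl ?_⟩
    rwa [(hc u i).mpr hu, (hc v j).mpr hv]

end Prune

variable {V : Type*} {Γ : SimpleGraph V} {k : ℕ} {c : V → Fin k} {S : Fin k → Fin k → ℝ}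
  {P : Fin k → Finset V}

theorem mul_card_mul_card_le_card_interedges_pruneByWeight (hc : ∀ v i, c v = i ↔ v ∈ P i)
    {i j : Fin k} (hS0 : 0 ≤ S i j) (hSle : S i j ≤ clusterW Γ P i j) :
    S i j * (#(P i) * #(P j)) ≤ #((Γ.pruneByWeight c S).interedges (P i) (P j)) := by
  rcases hS0.eq_or_lt with h | h
  · rw [← h, zero_mul]
    positivity
  · rw [interedges_pruneByWeight hc h, ← clusterW_mul_card_mul_card]
    exact mul_le_mul_of_nonneg_right hSle (by positivity)

theorem eW_mul_sq_le_card_edgeFinset_pruneByWeight [Fintype V] (hc : ∀ v i, c v = i ↔ v ∈ P i)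
    (hS0 : ∀ i j, 0 ≤ S i j) (hSle : ∀ i j, S i j ≤ clusterW Γ P i j) {a : ℝ} (ha : 0 ≤ a)
    (hP : ∀ i, a ≤ #(P i)) :
    eW S * a ^ 2 ≤ #(Γ.pruneByWeight c S).edgeFinset := by
  have hsum : (2 * #(Γ.pruneByWeight c S).edgeFinset : ℝ) =
      ∑ i, ∑ j, (#((Γ.pruneByWeight c S).interedges (P i) (P j)) : ℝ) := by
    exact_mod_cast (sum_sum_card_interedges _ P hc).symm
  have h2 : 2 * (eW S * a ^ 2) ≤ 2 * #(Γ.pruneByWeight c S).edgeFinset :=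
    calc 2 * (eW S * a ^ 2) = ∑ i, ∑ j, S i j * (a * a) := by
          simp only [eW, ← sum_mul]
          ring
      _ ≤ ∑ i, ∑ j, S i j * (#(P i) * #(P j)) := by
          gcongr with i _ j _
          exacts [hS0 i j, hP i, hP j]
      _ ≤ _ := by
          rw [hsum]
          gcongr with i _ j _
          exact mul_card_mul_card_le_card_interedges_pruneByWeight hc (hS0 i j) (hSle i j)
  linarith

end SimpleGraph

open SimpleGraph in
theorem eW_mul_sq_le_logb_ncard_forb {V κ : Type*} [Fintype V] {α : κ → Type*}
    [∀ i, Fintype (α i)] (Γ : SimpleGraph V) (F : ∀ i, SimpleGraph (α i)) {k : ℕ}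
    {P : Fin k → Finset V} {c : V → Fin k} (hc : ∀ v i, c v = i ↔ v ∈ P i)
    {S : Fin k → Fin k → ℝ} (hSsymm : ∀ i j, S i j = S j i) (hS0 : ∀ i j, 0 ≤ S i j)
    (hSle : ∀ i j, S i j ≤ clusterW Γ P i j) (hSt : ∀ i, tW (F i) S = 0) {a : ℝ} (ha : 0 ≤ a)
    (hP : ∀ i, a ≤ #(P i)) :
    eW S * a ^ 2 ≤ Real.logb 2 (forb Γ F).ncard := by
  have hsub : ∀ H ≤ Γ.pruneByWeight c S, H ∈ forb Γ F := fun H hH =>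
    ⟨hH.trans (pruneByWeight_le Γ c S), fun i hcopy =>
      not_hasCopy_of_tW_eq_zero c hS0 (hSt i) (fun _ _ => pos_of_pruneByWeight_adj hSsymm)
        (hcopy.mono hH)⟩
  have hcount := two_pow_card_edgeFinset_le_ncard _ hsub
  calc eW S * a ^ 2 ≤ #(Γ.pruneByWeight c S).edgeFinset :=
        eW_mul_sq_le_card_edgeFinset_pruneByWeight hc hS0 hSle ha hP
    _ = Real.logb 2 (2 ^ #(Γ.pruneByWeight c S).edgeFinset) := by
        rw [Real.logb_pow, Real.logb_self_eq_one one_lt_two, mul_one]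
    _ ≤ Real.logb 2 (forb Γ F).ncard :=
        Real.logb_le_logb_of_le one_lt_two (by positivity) (by exact_mod_cast hcount)

theorem div_sq_mul_sq_sub_le {E k n : ℝ} (hk : 0 < k) (hkn : k ≤ n) (hE : E ≤ k ^ 2 / 2) :
    E / k ^ 2 * n ^ 2 - k * n ≤ E * ((n - k) / k) ^ 2 := by
  have hdiff : E / k ^ 2 * n ^ 2 - E * ((n - k) / k) ^ 2 = E / k ^ 2 * (k * (2 * n - k)) := by
    field_simp
    ring
  have hE' : E / k ^ 2 ≤ 1 / 2 := by
    rw [div_le_iff₀ (by positivity)]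
    linarith
  have hmul : E / k ^ 2 * (k * (2 * n - k)) ≤ 1 / 2 * (k * (2 * n - k)) :=
    mul_le_mul_of_nonneg_right hE' (by nlinarith)
  nlinarith

theorem stmt13_general {V : Type*} [Fintype V] [DecidableEq V] (Γ : SimpleGraph V)
    (n K : ℕ) (hn : n = Fintype.card V) (hK : K < n)
    {ι : Type*} (nF : ι → ℕ) (F : ∀ i, SimpleGraph (Fin (nF i)))
    {k : ℕ} (hk : 0 < k) (hkK : k ≤ K)
    (P : Fin k → Finset V)
    (hdisj : ∀ i j, i ≠ j → Disjoint (P i) (P j))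
    (hcover : Finset.univ.biUnion P = Finset.univ)
    (hsize : ∀ i j, (P i).card ≤ (P j).card + 1) :
    Real.logb 2
        ((Set.ncard {G : SimpleGraph V | G ≤ Γ ∧ ∀ i, ¬ HasCopy (F i) G} : ℝ)) ≥
      (sSup {x : ℝ | ∃ S : Fin k → Fin k → ℝ, (∀ i j, S i j = S j i) ∧
            (∀ i j, 0 ≤ S i j) ∧ (∀ i j, S i j ≤ clusterW Γ P i j) ∧
            (∀ i, tW (F i) S = 0) ∧ x = eW S} / (k : ℝ) ^ 2) * (n : ℝ) ^ 2 -
        (k : ℝ) * (n : ℝ) := by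
  change Real.logb 2 (forb Γ F).ncard ≥ _
  set L := Real.logb 2 (forb Γ F).ncard
  have hk' : (0 : ℝ) < k := by exact_mod_cast hk
  have hkn : (k : ℝ) ≤ n := by exact_mod_cast hkK.trans hK.le
  have hn' : (0 : ℝ) < n := hk'.trans_le hkn
  have hL : 0 ≤ L := div_nonneg (Real.log_natCast_nonneg _) (Real.log_nonneg one_le_two)
  have hrescale : ∀ x : ℝ, x / k ^ 2 * n ^ 2 - k * n ≤ L ↔ x ≤ (L + k * n) * k ^ 2 / n ^ 2 := by
    intro x
    rw [div_mul_eq_mul_div, sub_le_iff_le_add, div_le_iff₀ (by positivity),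
      le_div_iff₀ (by positivity)]
  have hcover' : ∀ v, ∃ i, v ∈ P i := fun v => by
    simpa using (Finset.ext_iff.mp hcover v).mpr (mem_univ v)
  obtain ⟨c, hc⟩ := exists_partIndex P hdisj hcover'
  have hP : ∀ i, ((n : ℝ) - k) / k ≤ #(P i) := by
    simpa [hn] using sub_div_le_card P hcover' hsize (by simpa using hk)
  rw [ge_iff_le, hrescale]
  refine Real.sSup_le ?_ (by positivity)
  rintro _ ⟨S, hSsymm, hS0, hSle, hSt, rfl⟩
  have hE : eW S ≤ k ^ 2 / 2 := by
    simpa using eW_le_card_sq_div_two fun i j => (hSle i j).trans (clusterW_le_one Γ P i j)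
  rw [← hrescale]
  exact (div_sq_mul_sq_sub_le hk' hkn hE).trans <| eW_mul_sq_le_logb_ncard_forb Γ F hc
    hSsymm hS0 hSle hSt (div_nonneg (sub_nonneg.mpr hkn) hk'.le) hP

/-- Counting `𝓕`-free spanning subgraphs from below: for every equipartition `𝒱` of `V(Γ)`
into `k ≤ K` classes (with `n > K`), `log₂|Forb(Γ,𝓕)| ≥ ex(Γ/𝒱,𝓕)·n² - k·n`. -/
theorem stmt13 {V : Type*} [Fintype V] [DecidableEq V] (Γ : SimpleGraph V)
    (n K : ℕ) (hn : n = Fintype.card V) (hK : K < n)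
    {ι : Type*} (nF : ι → ℕ) (F : ∀ i, SimpleGraph (Fin (nF i)))
    (hedge : ∀ i, ∃ a b, (F i).Adj a b)
    {k : ℕ} (hk : 0 < k) (hkK : k ≤ K)
    (P : Fin k → Finset V)
    (hdisj : ∀ i j, i ≠ j → Disjoint (P i) (P j))
    (hcover : Finset.univ.biUnion P = Finset.univ)
    (hsize : ∀ i j, (P i).card ≤ (P j).card + 1) :
    Real.logb 2
        ((Set.ncard {G : SimpleGraph V | G ≤ Γ ∧ ∀ i, ¬ HasCopy (F i) G} : ℝ)) ≥
      (sSup {x : ℝ | ∃ S : Fin k → Fin k → ℝ, (∀ i j, S i j = S j i) ∧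
            (∀ i j, 0 ≤ S i j) ∧ (∀ i j, S i j ≤ clusterW Γ P i j) ∧
            (∀ i, tW (F i) S = 0) ∧ x = eW S} / (k : ℝ) ^ 2) * (n : ℝ) ^ 2 -
        (k : ℝ) * (n : ℝ) :=
  stmt13_general Γ n K hn hK nF F hk hkK P hdisj hcover hsize
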